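/- arXiv:1302.1270 — 2 statements merged into one kernel-verified Lean document; each statement's English description precedes it below -/
import Mathlib

section
/- The function x ↦ g(x·d) is concave in x on [0,1] for each d ≥ 1, where g(c) = Q((Δδ/σ)·√(((1-ρ)c + 2ρ)/(1+ρ)) + Q⁻¹(β)), Δδ < 0, σ > 0, 0 ≤ ρ < 1, 1/2 < β < 1. Consequently the return function v(d,x) = g(x·d) - g(1) is concave in x. -/
/-!
`Q` is decreasing, and concave on `(-∞, 0]` because its derivative `-φ` decreases there. The
argument `c ↦ (Δδ/σ)·√(((1-ρ)c + 2ρ)/(1+ρ)) + Q⁻¹(β)` of `Q` in `g` is a nonpositive multiple of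
the square root of an affine function, plus the constant `Q⁻¹(β) < 0` (as `β > 1/2 = Q(0)`); so it
is convex with values in `(-∞, 0]`, and `g` is concave on `c ≥ 0`. Precomposing with the linear
map `x ↦ x·d` keeps `g` concave.
-/

open Real

/-- The Gaussian tail function `Q(x) = (1/√(2π)) ∫_x^∞ exp(-u²/2) du`. -/
noncomputable def gaussQ (x : ℝ) : ℝ :=
  (Real.sqrt (2 * Real.pi))⁻¹ * ∫ u in Set.Ioi x, Real.exp (-u ^ 2 / 2)

/-- `g(c) = Q((Δδ/σ)·√(((1-ρ)c + 2ρ)/(1+ρ)) + Q⁻¹(β))`, i.e. `1 - P_FA,CSS(c)`. -/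
noncomputable def gFun (Δδ σ ρ Qinvβ c : ℝ) : ℝ :=
  gaussQ (Δδ / σ * Real.sqrt (((1 - ρ) * c + 2 * ρ) / (1 + ρ)) + Qinvβ)

open MeasureTheory Set

section Composition

variable {𝕜 E α β : Type*} [Semiring 𝕜] [PartialOrder 𝕜] [AddCommMonoid E]
  [AddCommMonoid α] [PartialOrder α] [AddCommMonoid β] [PartialOrder β]
  [SMul 𝕜 E] [SMul 𝕜 α] [SMul 𝕜 β] {s : Set E} {t : Set β} {f : E → β} {g : β → α}

theorem ConcaveOn.comp_of_mapsTo (hg : ConcaveOn 𝕜 t g) (hf : ConcaveOn 𝕜 s f)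
    (hg' : MonotoneOn g t) (hst : MapsTo f s t) : ConcaveOn 𝕜 s (g ∘ f) :=
  ⟨hf.1, fun _ hx _ hy _ _ ha hb hab =>
    (hg.2 (hst hx) (hst hy) ha hb hab).trans <|
      hg' (hg.1 (hst hx) (hst hy) ha hb hab) (hst <| hf.1 hx hy ha hb hab) <|
        hf.2 hx hy ha hb hab⟩

theorem ConcaveOn.comp_convexOn_of_mapsTo (hg : ConcaveOn 𝕜 t g) (hf : ConvexOn 𝕜 s f)
    (hg' : AntitoneOn g t) (hst : MapsTo f s t) : ConcaveOn 𝕜 s (g ∘ f) :=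
  ⟨hf.1, fun _ hx _ hy _ _ ha hb hab =>
    (hg.2 (hst hx) (hst hy) ha hb hab).trans <|
      hg' (hst <| hf.1 hx hy ha hb hab) (hg.1 (hst hx) (hst hy) ha hb hab) <|
        hf.2 hx hy ha hb hab⟩

end Composition

theorem hasDerivAt_integral_Ioi {f : ℝ → ℝ} (hf : Integrable f) (hc : Continuous f) (x : ℝ) :
    HasDerivAt (fun y => ∫ u in Ioi y, f u) (-f x) x := by
  have htail : (fun y => ∫ u in Ioi y, f u) = fun y => (∫ u in Ioi 0, f u) - ∫ u in 0..y, f u := by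
    funext y
    rw [← intervalIntegral.integral_Ioi_sub_Ioi' hf.integrableOn hf.integrableOn, sub_sub_cancel]
  rw [htail]
  exact (intervalIntegral.integral_hasDerivAt_right hf.intervalIntegrable
    hc.aestronglyMeasurable.stronglyMeasurableAtFilter hc.continuousAt).const_sub _

theorem gaussQ_hasDerivAt (x : ℝ) :
    HasDerivAt gaussQ (-((√(2 * π))⁻¹ * exp (-x ^ 2 / 2))) x := by
  have hint : Integrable fun u : ℝ => exp (-u ^ 2 / 2) := by
    simpa [neg_div, div_eq_inv_mul] using integrable_exp_neg_mul_sq (b := 1 / 2) (by norm_num)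
  rw [neg_mul_eq_mul_neg]
  exact (hasDerivAt_integral_Ioi hint (by fun_prop) x).const_mul _

theorem gaussQ_antitone : Antitone gaussQ :=
  antitone_of_deriv_nonpos (fun x => (gaussQ_hasDerivAt x).differentiableAt) fun x => by
    rw [(gaussQ_hasDerivAt x).deriv, neg_nonpos]
    positivity

theorem gaussQ_zero : gaussQ 0 = 1 / 2 := by
  have h : (fun u : ℝ => exp (-u ^ 2 / 2)) = fun u => exp (-(1 / 2) * u ^ 2) := by
    funext u; ring_nf
  rw [gaussQ, h, integral_gaussian_Ioi, show π / (1 / 2 : ℝ) = 2 * π by ring]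
  have : (0 : ℝ) < √(2 * π) := by positivity
  field_simp

theorem neg_of_half_lt_gaussQ {x : ℝ} (h : 1 / 2 < gaussQ x) : x < 0 := by
  by_contra! hx
  linarith [gaussQ_antitone hx, gaussQ_zero]

theorem gaussQ_concaveOn_Iic : ConcaveOn ℝ (Iic 0) gaussQ := by
  refine AntitoneOn.concaveOn_of_deriv (convex_Iic 0)
    (fun x _ => (gaussQ_hasDerivAt x).continuousAt.continuousWithinAt)
    (fun x _ => (gaussQ_hasDerivAt x).differentiableAt.differentiableWithinAt) ?_
  intro x hx y hy hxy
  rw [interior_Iic] at hx hy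
  rw [(gaussQ_hasDerivAt x).deriv, (gaussQ_hasDerivAt y).deriv, neg_le_neg_iff]
  have hsq : y ^ 2 ≤ x ^ 2 := by nlinarith [hx.out, hy.out]
  gcongr

theorem gFun_concaveOn_Ici {Δδ σ ρ Qinvβ : ℝ} (hΔδ : Δδ ≤ 0) (hσ : 0 ≤ σ) (hρ0 : 0 ≤ ρ)
    (hρ1 : ρ ≤ 1) (hQinv : Qinvβ ≤ 0) : ConcaveOn ℝ (Ici 0) (gFun Δδ σ ρ Qinvβ) := by
  set u : ℝ → ℝ := fun c => ((1 - ρ) * c + 2 * ρ) / (1 + ρ)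
  have hk : Δδ / σ ≤ 0 := div_nonpos_of_nonpos_of_nonneg hΔδ hσ
  have hu_concave : ConcaveOn ℝ (Ici 0) u := by
    refine ⟨convex_Ici 0, fun x _ y _ a b _ _ hab => le_of_eq ?_⟩
    have : 1 + ρ ≠ 0 := by linarith
    simp only [u, smul_eq_mul]
    field_simp
    linear_combination (2 * ρ) * hab
  have hu_nonneg : MapsTo u (Ici 0) (Ici 0) := fun c (hc : 0 ≤ c) => by
    show 0 ≤ ((1 - ρ) * c + 2 * ρ) / (1 + ρ)
    have : 0 ≤ (1 - ρ) * c := mul_nonneg (by linarith) hc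
    exact div_nonneg (by linarith) (by linarith)
  have hsqrt : ConcaveOn ℝ (Ici 0) fun c => √(u c) :=
    strictConcaveOn_sqrt.concaveOn.comp_of_mapsTo hu_concave
      (fun _ _ _ _ h => Real.sqrt_le_sqrt h) hu_nonneg
  have harg : ConvexOn ℝ (Ici 0) fun c => Δδ / σ * √(u c) + Qinvβ :=
    ((hsqrt.smul (neg_nonneg.2 hk)).neg.add_const Qinvβ).congr fun c _ => by
      simp only [Pi.add_apply, Pi.neg_apply, smul_eq_mul]
      ring
  have harg_nonpos : MapsTo (fun c => Δδ / σ * √(u c) + Qinvβ) (Ici 0) (Iic 0) := fun c _ => by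
    have : Δδ / σ * √(u c) ≤ 0 := mul_nonpos_of_nonpos_of_nonneg hk (Real.sqrt_nonneg _)
    exact add_nonpos this hQinv
  exact gaussQ_concaveOn_Iic.comp_convexOn_of_mapsTo harg (gaussQ_antitone.antitoneOn _)
    harg_nonpos

theorem g_comp_concave_general (Δδ σ ρ β Qinvβ : ℝ)
    (hΔδ : Δδ < 0) (hσ : 0 < σ) (hρ0 : 0 ≤ ρ) (hρ1 : ρ < 1)
    (hβ0 : 1 / 2 < β) (hQinv : gaussQ Qinvβ = β)
    (d : ℝ) (hd : 1 ≤ d) :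
    ConcaveOn ℝ (Set.Icc (0 : ℝ) 1) (fun x : ℝ => gFun Δδ σ ρ Qinvβ (x * d)) ∧
    ConcaveOn ℝ (Set.Icc (0 : ℝ) 1)
      (fun x : ℝ => gFun Δδ σ ρ Qinvβ (x * d) - gFun Δδ σ ρ Qinvβ 1) := by
  have hQneg : Qinvβ < 0 := neg_of_half_lt_gaussQ (hQinv ▸ hβ0)
  have hg := gFun_concaveOn_Ici hΔδ.le hσ.le hρ0 hρ1.le hQneg.le
  have hgd : ConcaveOn ℝ (Icc 0 1) fun x => gFun Δδ σ ρ Qinvβ (x * d) :=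
    (hg.comp_linearMap (LinearMap.mulRight ℝ d)).subset
      (fun x hx => mul_nonneg hx.1 (by linarith)) (convex_Icc 0 1)
  exact ⟨hgd, hgd.sub (convexOn_const _ (convex_Icc 0 1))⟩

/-- For each `d ≥ 1`, `x ↦ g(x·d)` is concave on `[0,1]` (with `Δδ < 0`, `σ > 0`,
`0 ≤ ρ < 1`, `1/2 < β < 1`), and hence the return function
`v(d,x) = g(x·d) - g(1)` is concave in `x`. -/
theorem g_comp_concave (Δδ σ ρ β Qinvβ : ℝ)
    (hΔδ : Δδ < 0) (hσ : 0 < σ) (hρ0 : 0 ≤ ρ) (hρ1 : ρ < 1)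
    (hβ0 : 1 / 2 < β) (hβ1 : β < 1) (hQinv : gaussQ Qinvβ = β)
    (d : ℝ) (hd : 1 ≤ d) :
    ConcaveOn ℝ (Set.Icc (0 : ℝ) 1) (fun x : ℝ => gFun Δδ σ ρ Qinvβ (x * d)) ∧
    ConcaveOn ℝ (Set.Icc (0 : ℝ) 1)
      (fun x : ℝ => gFun Δδ σ ρ Qinvβ (x * d) - gFun Δδ σ ρ Qinvβ 1) :=
  g_comp_concave_general Δδ σ ρ β Qinvβ hΔδ hσ hρ0 hρ1 hβ0 hQinv d hd
end

section
/- The term √(((1-ρ)c + 2ρ)/(1+ρ)) is strictly decreasing in ρ ∈ [0,1) for each fixed c > 1, and consequently P_FA,CSS(c) = 1 - Q((Δδ/σ)·√(((1-ρ)c+2ρ)/(1+ρ)) + Q⁻¹(β)) is increasing in ρ when Δδ < 0. -/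
/-!
The ratio `((1-ρ)c + 2ρ)/(1+ρ)` equals `(2 - c) + 2(c - 1)/(1 + ρ)`, so it strictly decreases in
`ρ > -1` as soon as `c > 1`, and so does its square root. Multiplying by `Δδ/σ < 0` makes the
argument of `Q` strictly increasing, and `Q` is strictly decreasing because its integrand is
positive; hence `1 - Q(⋯)` strictly increases.
-/

open Real

open MeasureTheory Set

theorem strictAnti_setIntegral_Ioi {f : ℝ → ℝ} (hf : Integrable f) (hpos : ∀ x, 0 < f x) :
    StrictAnti fun x => ∫ u in Ioi x, f u := by
  intro a b hab
  have hsplit : ∫ u in Ioi a, f u = (∫ u in Ioc a b, f u) + ∫ u in Ioi b, f u := by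
    rw [← setIntegral_union (Ioc_disjoint_Ioi le_rfl) measurableSet_Ioi hf.integrableOn
      hf.integrableOn, Ioc_union_Ioi_eq_Ioi hab.le]
  have hmid : 0 < ∫ u in Ioc a b, f u := by
    rw [← intervalIntegral.integral_of_le hab.le]
    exact intervalIntegral.intervalIntegral_pos_of_pos_on hf.intervalIntegrable
      (fun x _ => hpos x) hab
  linarith

theorem integrable_exp_neg_sq_div_two : Integrable fun u : ℝ => exp (-u ^ 2 / 2) := by
  convert integrable_exp_neg_mul_sq (b := (1 / 2 : ℝ)) (by norm_num) using 2 with u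
  ring_nf

theorem gaussQ_strictAnti : StrictAnti gaussQ := fun _ _ hab =>
  mul_lt_mul_of_pos_left
    (strictAnti_setIntegral_Ioi integrable_exp_neg_sq_div_two (fun _ => exp_pos _) hab)
    (by positivity)

theorem strictAntiOn_correlation_ratio {c : ℝ} (hc : 1 < c) :
    StrictAntiOn (fun ρ : ℝ => ((1 - ρ) * c + 2 * ρ) / (1 + ρ)) (Ioi (-1)) := by
  intro x hx y hy hxy
  have hx' : 0 < 1 + x := by linarith [mem_Ioi.1 hx]
  have hy' : 0 < 1 + y := by linarith [mem_Ioi.1 hy]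
  rw [div_lt_div_iff₀ hy' hx']
  nlinarith [mul_pos (sub_pos.2 hxy) (sub_pos.2 hc)]

theorem strictAntiOn_sqrt_correlation_ratio {c : ℝ} (hc : 1 < c) :
    StrictAntiOn (fun ρ : ℝ => √(((1 - ρ) * c + 2 * ρ) / (1 + ρ))) (Ioc (-1) 1) := by
  intro x hx y hy hxy
  have hnum : 0 ≤ (1 - y) * c + 2 * y := by nlinarith [hy.1, hy.2]
  exact sqrt_lt_sqrt (div_nonneg hnum (by linarith [hy.1]))
    (strictAntiOn_correlation_ratio hc (Ioc_subset_Ioi_self hx) (Ioc_subset_Ioi_self hy) hxy)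

/-- For fixed `c > 1`, the term `√(((1-ρ)c + 2ρ)/(1+ρ))` is strictly decreasing
in `ρ ∈ [0,1)`, and consequently (for `Δδ < 0`)
`P_FA,CSS(c) = 1 - Q((Δδ/σ)·√(((1-ρ)c+2ρ)/(1+ρ)) + Q⁻¹(β))` is increasing in `ρ`. -/
theorem Pfa_increasing_in_correlation (Δδ σ Qinvβ c : ℝ)
    (hΔδ : Δδ < 0) (hσ : 0 < σ) (hc : 1 < c) :
    StrictAntiOn (fun ρ : ℝ => Real.sqrt (((1 - ρ) * c + 2 * ρ) / (1 + ρ)))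
      (Set.Ico (0 : ℝ) 1) ∧
    StrictMonoOn
      (fun ρ : ℝ =>
        1 - gaussQ (Δδ / σ * Real.sqrt (((1 - ρ) * c + 2 * ρ) / (1 + ρ)) + Qinvβ))
      (Set.Ico (0 : ℝ) 1) := by
  have hsqrt := (strictAntiOn_sqrt_correlation_ratio hc).mono
    fun ρ (hρ : ρ ∈ Ico (0 : ℝ) 1) => ⟨by linarith [hρ.1], hρ.2.le⟩
  have hslope : Δδ / σ < 0 := div_neg_of_neg_of_pos hΔδ hσ
  refine ⟨hsqrt, fun x hx y hy hxy => sub_lt_sub_left (gaussQ_strictAnti ?_) 1⟩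
  exact add_lt_add_left (mul_lt_mul_of_neg_left (hsqrt hx hy hxy) hslope) Qinvβ
end
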